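/- Let L/K be a totally ramified Galois extension of degree p of complete discrete valued fields of characteristic p, with ramification break s, and let σ be a generator of Gal(L/K). If x ∈ O_L satisfies tr(x) = 0 and v_L(x) ≥ s, then x ∈ (σ−1)O_L, i.e., x = σ(y) − y for some y ∈ O_L. Equivalently, any trace-zero element x ∈ O_L representing a nonzero class in H^1(Gal(L/K), O_L) satisfies v_L(x) ≤ s − 1. -/

import Mathlib

/-!
Common background: complete discretely valued fields, their valuation rings,
residue fields, Galois action on the valuation ring, truncated Witt vector
functoriality, and ramification breaks.
-/

noncomputable section

open scoped Classical

/-- A field equipped with a normalized (i.e. surjective onto `ℤ`) discrete additive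
valuation `v : K → WithTop ℤ` with respect to which it is complete. -/
structure CompleteDiscreteValuation (K : Type*) [Field K] where
  v : K → WithTop ℤ
  eq_top_iff : ∀ x : K, v x = ⊤ ↔ x = 0
  map_one : v 1 = 0
  map_mul : ∀ x y : K, v (x * y) = v x + v y
  min_le_add : ∀ x y : K, min (v x) (v y) ≤ v (x + y)
  surjective : ∀ n : ℤ, ∃ x : K, v x = (n : WithTop ℤ)
  complete : ∀ x : ℕ → K,
      (∀ n : ℕ, ((n : ℤ) : WithTop ℤ) ≤ v (x (n + 1) - x n)) →
      ∃ y : K, ∀ n : ℕ, ((n : ℤ) : WithTop ℤ) ≤ v (y - x n)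

namespace TruncatedWittVector

variable {p n : ℕ} [hp : Fact p.Prime] {R S : Type*} [CommRing R] [CommRing S]

lemma truncateFun_congr_map (f : R →+* S) (a b : WittVector p R)
    (h : WittVector.truncateFun n a = WittVector.truncateFun n b) :
    WittVector.truncateFun n (WittVector.map f a) =
      WittVector.truncateFun n (WittVector.map f b) := by
  ext i
  have hc := congrArg (fun z => TruncatedWittVector.coeff i z) h
  simp only [WittVector.coeff_truncateFun] at hc ⊢
  rw [WittVector.map_coeff, WittVector.map_coeff, hc]

/-- Functoriality of truncated Witt vectors: the ring homomorphism
`W_n(R) → W_n(S)` induced by `f : R → S`, acting componentwise. -/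
def map (f : R →+* S) : TruncatedWittVector p n R →+* TruncatedWittVector p n S where
  toFun x := WittVector.truncateFun n (WittVector.map f x.out)
  map_one' := by
    show WittVector.truncateFun n (WittVector.map f (1 : TruncatedWittVector p n R).out) = 1
    have h : WittVector.truncateFun n ((1 : TruncatedWittVector p n R)).out =
        WittVector.truncateFun n (1 : WittVector p R) := by
      rw [truncateFun_out, WittVector.truncateFun_one]
    have := truncateFun_congr_map f _ _ h
    rw [this, map_one, WittVector.truncateFun_one]
  map_mul' x y := by
    show WittVector.truncateFun n (WittVector.map f (x * y).out) =
      WittVector.truncateFun n (WittVector.map f x.out) *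
        WittVector.truncateFun n (WittVector.map f y.out)
    have h : WittVector.truncateFun n (x * y).out =
        WittVector.truncateFun n (x.out * y.out) := by
      rw [truncateFun_out, WittVector.truncateFun_mul, truncateFun_out, truncateFun_out]
    have := truncateFun_congr_map f _ _ h
    rw [this, map_mul, WittVector.truncateFun_mul]
  map_zero' := by
    show WittVector.truncateFun n (WittVector.map f (0 : TruncatedWittVector p n R).out) = 0
    have h : WittVector.truncateFun n ((0 : TruncatedWittVector p n R)).out =
        WittVector.truncateFun n (0 : WittVector p R) := by
      rw [truncateFun_out, WittVector.truncateFun_zero]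
    have := truncateFun_congr_map f _ _ h
    rw [this, map_zero, WittVector.truncateFun_zero]
  map_add' x y := by
    show WittVector.truncateFun n (WittVector.map f (x + y).out) =
      WittVector.truncateFun n (WittVector.map f x.out) +
        WittVector.truncateFun n (WittVector.map f y.out)
    have h : WittVector.truncateFun n (x + y).out =
        WittVector.truncateFun n (x.out + y.out) := by
      rw [truncateFun_out, WittVector.truncateFun_add, truncateFun_out, truncateFun_out]
    have := truncateFun_congr_map f _ _ h
    rw [this, map_add, WittVector.truncateFun_add]

@[simp]
lemma map_coeff (f : R →+* S) (x : TruncatedWittVector p n R) (i : Fin n) :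
    (map f x).coeff i = f (x.coeff i) := by
  show (WittVector.truncateFun n (WittVector.map f x.out)).coeff i = f (x.coeff i)
  rw [WittVector.coeff_truncateFun, WittVector.map_coeff, coeff_out]

end TruncatedWittVector

namespace CompleteDiscreteValuation

variable {K : Type*} [Field K]

lemma v_zero (w : CompleteDiscreteValuation K) : w.v 0 = ⊤ := (w.eq_top_iff 0).2 rfl

lemma v_neg_one (w : CompleteDiscreteValuation K) : w.v (-1) = 0 := by
  have h := w.map_mul (-1) (-1)
  rw [neg_mul_neg, one_mul, w.map_one] at h
  cases h' : w.v (-1) with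
  | top =>
      exact absurd ((w.eq_top_iff (-1)).1 h') (by norm_num)
  | coe a =>
      rw [h'] at h
      have ha : a + a = 0 := by exact_mod_cast h.symm
      have : a = 0 := by omega
      rw [this]
      rfl

lemma v_neg (w : CompleteDiscreteValuation K) (x : K) : w.v (-x) = w.v x := by
  rw [show -x = -1 * x by ring, w.map_mul, w.v_neg_one, zero_add]

/-- The valuation ring (ring of integers) of a complete discretely valued field. -/
def integers (w : CompleteDiscreteValuation K) : Subring K where
  carrier := {x : K | 0 ≤ w.v x}
  zero_mem' := by simp [Set.mem_setOf_eq, v_zero]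
  one_mem' := by simp [Set.mem_setOf_eq, w.map_one]
  add_mem' {a b} ha hb := le_trans (le_min ha hb) (w.min_le_add a b)
  mul_mem' {a b} ha hb := by
    simp only [Set.mem_setOf_eq] at *
    rw [w.map_mul]
    exact add_nonneg ha hb
  neg_mem' {a} ha := by
    simp only [Set.mem_setOf_eq] at *
    rwa [w.v_neg]

lemma mem_integers_iff (w : CompleteDiscreteValuation K) (x : K) :
    x ∈ w.integers ↔ 0 ≤ w.v x := Iff.rfl

/-- The maximal ideal of the valuation ring. -/
def maxIdeal (w : CompleteDiscreteValuation K) : Ideal w.integers where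
  carrier := {x | 0 < w.v (x : K)}
  zero_mem' := by simp [Set.mem_setOf_eq, v_zero]
  add_mem' {a b} ha hb := lt_of_lt_of_le (lt_min ha hb) (w.min_le_add (a : K) (b : K))
  smul_mem' c x hx := by
    simp only [Set.mem_setOf_eq] at *
    show 0 < w.v ((c : K) * (x : K))
    rw [w.map_mul]
    exact lt_of_lt_of_le hx (le_add_of_nonneg_left c.2)

/-- The residue field of a complete discretely valued field. -/
abbrev residueField (w : CompleteDiscreteValuation K) := w.integers ⧸ w.maxIdeal

section Extension

variable {L : Type*} [Field L] [Algebra K L]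

/-- The ring homomorphism between valuation rings induced by the inclusion `K ⟶ L`,
when the valuation of `L` restricts to `e` times the valuation of `K`. -/
def integerMap (wK : CompleteDiscreteValuation K) (wL : CompleteDiscreteValuation L)
    (e : ℕ) (hcomp : ∀ x : K, wL.v (algebraMap K L x) = e • wK.v x) :
    wK.integers →+* wL.integers where
  toFun x := ⟨algebraMap K L x, by
    rw [mem_integers_iff, hcomp]
    exact nsmul_nonneg x.2 e⟩
  map_one' := Subtype.ext (by simp)
  map_mul' x y := Subtype.ext (by simp)
  map_zero' := Subtype.ext (by simp)
  map_add' x y := Subtype.ext (by simp)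

/-- The induced homomorphism between the residue fields. -/
def residueMap (wK : CompleteDiscreteValuation K) (wL : CompleteDiscreteValuation L)
    (e : ℕ) (he : 0 < e) (hcomp : ∀ x : K, wL.v (algebraMap K L x) = e • wK.v x) :
    wK.residueField →+* wL.residueField :=
  Ideal.Quotient.lift wK.maxIdeal
    ((Ideal.Quotient.mk wL.maxIdeal).comp (integerMap wK wL e hcomp))
    (by
      intro a ha
      rw [RingHom.comp_apply, Ideal.Quotient.eq_zero_iff_mem]
      show 0 < wL.v (algebraMap K L (a : K))
      rw [hcomp]
      calc (0 : WithTop ℤ) < wK.v (a : K) := ha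
        _ = 1 • wK.v (a : K) := (one_nsmul _).symm
        _ ≤ e • wK.v (a : K) := nsmul_le_nsmul_left (le_of_lt ha) he)

/-- The induced extension of residue fields `k_L / k_K` is separable. -/
def ResidueSeparable (wK : CompleteDiscreteValuation K) (wL : CompleteDiscreteValuation L)
    (e : ℕ) (he : 0 < e) (hcomp : ∀ x : K, wL.v (algebraMap K L x) = e • wK.v x) : Prop :=
  letI : Algebra wK.residueField wL.residueField := (residueMap wK wL e he hcomp).toAlgebra
  Algebra.IsSeparable wK.residueField wL.residueField

/-- A `K`-algebra automorphism of `L` (necessarily preserving the valuation, which is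
recorded in the hypothesis `hGal`) restricts to a ring homomorphism of the valuation
ring `O_L`.  This is the Galois action on `O_L`. -/
def galRes (wL : CompleteDiscreteValuation L)
    (hGal : ∀ (σ : L ≃ₐ[K] L) (x : L), wL.v (σ x) = wL.v x) (σ : L ≃ₐ[K] L) :
    wL.integers →+* wL.integers where
  toFun x := ⟨σ x, by rw [mem_integers_iff, hGal]; exact x.2⟩
  map_one' := Subtype.ext (by simp)
  map_mul' x y := Subtype.ext (by simp)
  map_zero' := Subtype.ext (by simp)
  map_add' x y := Subtype.ext (by simp)

/-- The statement that the action of the Galois group of `L/K` on `O_L/m_L^{s+1}`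
is faithful: every nontrivial automorphism moves some integer of `L` by an element
of valuation at most `s`. -/
def FaithfulOnQuotient (K : Type*) [Field K] {L : Type*} [Field L] [Algebra K L]
    (wL : CompleteDiscreteValuation L) (s : ℕ) : Prop :=
  ∀ σ : L ≃ₐ[K] L, σ ≠ 1 → ∃ x : L, 0 ≤ wL.v x ∧ wL.v (σ x - x) ≤ ((s : ℤ) : WithTop ℤ)

/-- `s` is the ramification break (lower ramification jump) of `L/K`: the smallest
nonnegative integer such that the induced action of `Gal(L/K)` on `O_L/m_L^{s+1}`
is faithful. -/
def IsRamificationBreak (K : Type*) [Field K] {L : Type*} [Field L] [Algebra K L]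
    (wL : CompleteDiscreteValuation L) (s : ℕ) : Prop :=
  FaithfulOnQuotient K wL s ∧ ∀ t : ℕ, t < s → ¬ FaithfulOnQuotient K wL t

end Extension

end CompleteDiscreteValuation

open CompleteDiscreteValuation

/-!
By additive Hilbert 90, `x = σ y - y` for some `y ∈ L`, and it remains to push `y` into `O_L`
without changing `σ y - y`. If `v y < 0` and `p ∣ v y`, then `y` agrees with an element of `K`
to first order (the residue field does not grow), and subtracting it raises `v y`. If `p ∤ v y`,
writing `y = u π ^ n` with `u` a unit gives `v (σ y - y) = v y + s - 1 < s ≤ v x`, which is absurd.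
This computation needs `v (σ π / π - 1) = s - 1 ≥ 1`.

The valuation facts needed along the way (Galois invariance of `v_L`, `v (σ π - π) = s`, the
residue approximation) follow from expanding elements in the basis `1, π, …, π ^ (p - 1)`,
whose nonzero terms have valuations in distinct classes modulo `p`.
-/

open Finset

lemma Int.eq_of_mul_add_eq_mul_add {p a b : ℤ} {i j : ℕ} (hi : i < p) (hj : j < p)
    (h : p * a + i = p * b + j) : i = j := by
  have := congrArg (· % p) h
  simp only [Int.mul_add_emod_self_left] at this
  rw [Int.emod_eq_of_lt (by positivity) hi, Int.emod_eq_of_lt (by positivity) hj] at this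
  exact_mod_cast this

lemma WithTop.coe_add_one_le_of_coe_lt {m : ℤ} {x : WithTop ℤ} (h : (m : WithTop ℤ) < x) :
    ((m + 1 : ℤ) : WithTop ℤ) ≤ x := by
  cases x with
  | top => exact le_top
  | coe a => exact WithTop.coe_le_coe.2 (WithTop.coe_lt_coe.1 h)

lemma sum_univ_eq_sum_range_pow_of_forall_mem_zpowers {G M : Type*} [Group G] [Fintype G]
    [AddCommMonoid M] {g : G} (hg : ∀ x, x ∈ Subgroup.zpowers g) (f : G → M) :
    ∑ x, f x = ∑ i ∈ range (orderOf g), f (g ^ i) := by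
  have hbij : Function.Bijective fun i : Fin (orderOf g) ↦ g ^ (i : ℕ) := by
    refine (Fintype.bijective_iff_injective_and_card _).2 ⟨fun i j hij ↦ ?_, ?_⟩
    · exact Fin.ext (pow_injOn_Iio_orderOf i.2 j.2 hij)
    · rw [Fintype.card_fin, orderOf_eq_card_of_forall_mem_zpowers hg, Nat.card_eq_fintype_card]
  rw [← Fin.sum_univ_eq_sum_range (fun i ↦ f (g ^ i))]
  exact (Fintype.sum_bijective _ hbij _ _ fun _ ↦ rfl).symm

namespace AlgEquiv

variable {R A : Type*} [CommSemiring R]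

lemma exists_apply_sub_self_eq [CommRing A] [Algebra R A] (σ : A ≃ₐ[R] A) {n : ℕ}
    (hσ : σ ^ n = 1) {c : A} (hc : ∑ i ∈ range n, (σ ^ i) c = 1) {x : A}
    (hx : ∑ i ∈ range n, (σ ^ i) x = 0) : ∃ y, σ y - y = x := by
  have hσ_pow (i : ℕ) (a : A) : σ ((σ ^ i) a) = (σ ^ (i + 1)) a := by
    rw [pow_succ', AlgEquiv.mul_apply]
  let S (i : ℕ) : A := ∑ j ∈ range i, (σ ^ j) x
  let F (i : ℕ) : A := S i * (σ ^ i) c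
  have hσS (i : ℕ) : σ (S i) = S (i + 1) - x := by
    simp only [S, map_sum, hσ_pow, sum_range_succ' _ i, pow_zero, AlgEquiv.one_apply,
      add_sub_cancel_right]
  have hσF (i : ℕ) : σ (F i) = F (i + 1) - x * (σ ^ (i + 1)) c := by
    simp only [F, _root_.map_mul, hσS, hσ_pow]
    ring
  have hshift : ∑ i ∈ range n, (σ ^ (i + 1)) c = 1 := by
    have := sum_range_succ' (fun i ↦ (σ ^ i) c) n
    rw [sum_range_succ, hσ, pow_zero] at this
    rw [← hc]
    exact (add_right_cancel this).symm
  refine ⟨-∑ i ∈ range n, F i, ?_⟩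
  calc σ (-∑ i ∈ range n, F i) - -∑ i ∈ range n, F i
      = -∑ i ∈ range n, (F (i + 1) - F i) + x * ∑ i ∈ range n, (σ ^ (i + 1)) c := by
        simp only [map_neg, map_sum, hσF, sum_sub_distrib, mul_sum]
        ring
    _ = x := by
        rw [sum_range_sub, hshift]
        simp only [F, S, hx, sum_range_zero, zero_mul, sub_zero, mul_one, neg_zero, zero_add]

lemma prod_range_pow_apply_div [Field A] [Algebra R A] (σ : A ≃ₐ[R] A) {π : A} (hπ : π ≠ 0)
    (n : ℕ) : ∏ j ∈ range n, (σ ^ j) (σ π / π) = (σ ^ n) π / π := by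
  induction n with
  | zero => simp [hπ]
  | succ n ih =>
    have hσnπ : (σ ^ n) π ≠ 0 := (map_ne_zero (σ ^ n)).2 hπ
    rw [prod_range_succ, ih, map_div₀, ← AlgEquiv.mul_apply, ← pow_succ]
    field_simp

end AlgEquiv

lemma exists_apply_sub_self_eq_of_sum_aut_eq_zero {K L : Type*} [Field K] [Field L]
    [Algebra K L] [FiniteDimensional K L] [IsGalois K L] {σ : L ≃ₐ[K] L}
    (hσ : ∀ τ : L ≃ₐ[K] L, τ ∈ Subgroup.zpowers σ) {x : L}
    (hx : ∑ τ : L ≃ₐ[K] L, τ x = 0) : ∃ y, σ y - y = x := by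
  obtain ⟨c, hc⟩ := Algebra.trace_surjective K L 1
  have hc' : ∑ τ : L ≃ₐ[K] L, τ c = 1 := by
    rw [← trace_eq_sum_automorphisms, hc, _root_.map_one]
  rw [sum_univ_eq_sum_range_pow_of_forall_mem_zpowers hσ (fun τ ↦ τ _)] at hx hc'
  exact σ.exists_apply_sub_self_eq (pow_orderOf_eq_one σ) hc' hx

namespace CompleteDiscreteValuation

section Valuation

variable {K : Type*} [Field K] (w : CompleteDiscreteValuation K)

def toAddValuation : AddValuation K (WithTop ℤ) :=
  AddValuation.of w.v w.v_zero w.map_one w.min_le_add w.map_mul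

lemma v_ne_top_iff {x : K} : w.v x ≠ ⊤ ↔ x ≠ 0 := (w.eq_top_iff x).not

lemma exists_v_eq_coe {x : K} (hx : x ≠ 0) : ∃ a : ℤ, w.v x = a :=
  (WithTop.ne_top_iff_exists.1 (w.v_ne_top_iff.2 hx)).imp fun _ h ↦ h.symm

lemma v_le_add {g : WithTop ℤ} {x y : K} (hx : g ≤ w.v x) (hy : g ≤ w.v y) :
    g ≤ w.v (x + y) :=
  w.toAddValuation.map_le_add hx hy

lemma v_le_sub {g : WithTop ℤ} {x y : K} (hx : g ≤ w.v x) (hy : g ≤ w.v y) :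
    g ≤ w.v (x - y) :=
  w.toAddValuation.map_le_sub hx hy

lemma v_le_sum {ι : Type*} {s : Finset ι} {f : ι → K} {g : WithTop ℤ}
    (hf : ∀ i ∈ s, g ≤ w.v (f i)) : g ≤ w.v (∑ i ∈ s, f i) :=
  w.toAddValuation.map_le_sum hf

lemma v_lt_sum {ι : Type*} {s : Finset ι} {f : ι → K} {g : WithTop ℤ} (hg : g ≠ ⊤)
    (hf : ∀ i ∈ s, g < w.v (f i)) : g < w.v (∑ i ∈ s, f i) :=
  w.toAddValuation.map_lt_sum hg hf

lemma v_add_eq_of_lt {x y : K} (h : w.v x < w.v y) : w.v (x + y) = w.v x :=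
  w.toAddValuation.map_add_eq_of_lt_left h

lemma v_sub_comm (x y : K) : w.v (x - y) = w.v (y - x) :=
  w.toAddValuation.map_sub_swap x y

lemma v_pow (x : K) (n : ℕ) : w.v (x ^ n) = n • w.v x :=
  w.toAddValuation.map_pow x n

lemma v_inv (x : K) : w.v x⁻¹ = -w.v x :=
  w.toAddValuation.map_inv

lemma v_mul_nonneg {x y : K} (hx : 0 ≤ w.v x) (hy : 0 ≤ w.v y) : 0 ≤ w.v (x * y) := by
  rw [w.map_mul]; exact add_nonneg hx hy

lemma v_pow_nonneg {x : K} (hx : 0 ≤ w.v x) (n : ℕ) : 0 ≤ w.v (x ^ n) := by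
  rw [w.v_pow]; exact nsmul_nonneg hx n

lemma v_pow_coe {x : K} {a : ℤ} (hx : w.v x = a) (n : ℕ) : w.v (x ^ n) = (n * a : ℤ) := by
  rw [w.v_pow, hx, ← WithTop.coe_nsmul, nsmul_eq_mul]

lemma v_zpow_coe {x : K} {a : ℤ} (hx : w.v x = a) (n : ℤ) : w.v (x ^ n) = (n * a : ℤ) := by
  obtain ⟨m, rfl | rfl⟩ := n.eq_nat_or_neg
  · simpa using w.v_pow_coe hx m
  · rw [zpow_neg, zpow_natCast, w.v_inv, w.v_pow_coe hx m]
    norm_cast; ring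

lemma ne_zero_of_v_eq_one {π : K} (hπ : w.v π = 1) : π ≠ 0 :=
  w.v_ne_top_iff.1 (by simp [hπ])

lemma v_pow_of_v_eq_one {π : K} (hπ : w.v π = 1) (n : ℕ) : w.v (π ^ n) = n := by
  rw [w.v_pow, hπ, nsmul_one]

lemma v_zpow_of_v_eq_one {π : K} (hπ : w.v π = 1) (n : ℤ) : w.v (π ^ n) = n := by
  simpa using w.v_zpow_coe (a := 1) hπ n

lemma v_eq_zero_of_pow_eq_one {x : K} {n : ℕ} (hn : n ≠ 0) (hx : x ^ n = 1) : w.v x = 0 := by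
  have hx0 : x ≠ 0 := by rintro rfl; simp [zero_pow hn] at hx
  obtain ⟨a, ha⟩ := w.exists_v_eq_coe hx0
  have := w.v_pow_coe ha n
  rw [hx, w.map_one] at this
  have : (n : ℤ) * a = 0 := by exact_mod_cast this.symm
  simp_all

lemma v_intCast_eq_zero {p : ℕ} (hp : p.Prime) [CharP K p] {n : ℤ} (hn : ¬(p : ℤ) ∣ n) :
    w.v (n : K) = 0 := by
  have : Fact p.Prime := ⟨hp⟩
  refine w.v_eq_zero_of_pow_eq_one (Nat.sub_ne_zero_of_lt hp.one_lt) ?_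
  have hn' : (n : ZMod p) ≠ 0 := by rwa [Ne, ZMod.intCast_zmod_eq_zero_iff_dvd]
  rw [← map_intCast (ZMod.castHom (dvd_refl p) K), ← map_pow, ZMod.pow_card_sub_one_eq_one hn',
    _root_.map_one]

lemma v_sum_le_of_injOn {ι : Type*} {s : Finset ι} {f : ι → K}
    (hf : ∀ i ∈ s, ∀ j ∈ s, f i ≠ 0 → w.v (f i) = w.v (f j) → i = j) {j : ι} (hj : j ∈ s) :
    w.v (∑ i ∈ s, f i) ≤ w.v (f j) := by
  classical
  obtain ⟨k, hk, hmin⟩ := s.exists_min_image (fun i ↦ w.v (f i)) ⟨j, hj⟩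
  by_cases hfk : f k = 0
  · have hj0 : f j = 0 :=
      (w.eq_top_iff _).1 (top_le_iff.1 (by simpa [hfk, w.v_zero] using hmin j hj))
    simp [hj0, w.v_zero]
  have hlt : w.v (f k) < w.v (∑ i ∈ s.erase k, f i) := by
    refine w.v_lt_sum (w.v_ne_top_iff.2 hfk) fun i hi ↦ ?_
    exact (hmin i (mem_of_mem_erase hi)).lt_of_ne fun h ↦
      ne_of_mem_erase hi (hf k hk i (mem_of_mem_erase hi) hfk h).symm
  rw [← add_sum_erase s f hk, w.v_add_eq_of_lt hlt]
  exact hmin j hj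

lemma v_le_v_map_of_le_add {F : Type*} [FunLike F K K] [MonoidWithZeroHomClass F K K] (f : F)
    {C : ℤ} (hC : ∀ u, w.v u ≤ w.v (f u) + C) (u : K) : w.v u ≤ w.v (f u) := by
  by_cases hfu : f u = 0
  · simp [hfu, w.v_zero]
  have hu : u ≠ 0 := by rintro rfl; exact hfu (map_zero f)
  obtain ⟨a, ha⟩ := w.exists_v_eq_coe hu
  obtain ⟨b, hb⟩ := w.exists_v_eq_coe hfu
  have hpow (n : ℕ) : (n : ℤ) * a ≤ n * b + C := by
    have := hC (u ^ n)
    rw [map_pow, w.v_pow_coe ha, w.v_pow_coe hb] at this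
    exact_mod_cast this
  rw [ha, hb, WithTop.coe_le_coe]
  by_contra! hba
  have hn := hpow (C.toNat + 1)
  push_cast at hn
  nlinarith [Int.self_le_toNat C, mul_le_mul_of_nonneg_left (show 1 ≤ a - b by omega)
    (show (0 : ℤ) ≤ C.toNat + 1 by positivity)]

lemma v_le_v_prod_sub_pow {a : ℕ → K} {b : K} {n : WithTop ℤ} (ha : ∀ j, 0 ≤ w.v (a j))
    (hb : 0 ≤ w.v b) (hab : ∀ j, n ≤ w.v (a j - b)) (k : ℕ) :
    n ≤ w.v (∏ j ∈ range k, a j - b ^ k) := by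
  induction k with
  | zero => simp [w.v_zero]
  | succ k ih =>
    have hsplit : ∏ j ∈ range (k + 1), a j - b ^ (k + 1) =
        (∏ j ∈ range k, a j - b ^ k) * a k + b ^ k * (a k - b) := by
      rw [prod_range_succ, pow_succ]; ring
    rw [hsplit]
    refine w.v_le_add ?_ ?_ <;> rw [w.map_mul]
    · exact le_add_of_le_of_nonneg ih (ha k)
    · exact le_add_of_nonneg_of_le (w.v_pow_nonneg hb k) (hab k)

lemma v_eq_zero_of_v_sub_one_pos {η : K} (hη : 0 < w.v (η - 1)) : w.v η = 0 := by
  simpa [w.map_one] using w.v_add_eq_of_lt (x := 1) (y := η - 1) (by rwa [w.map_one])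

lemma v_sub_one_le_v_pow_sub_one {η : K} (hη : 0 ≤ w.v η) (n : ℕ) :
    w.v (η - 1) ≤ w.v (η ^ n - 1) := by
  rw [← mul_geom_sum, w.map_mul]
  exact le_add_of_nonneg_right (w.v_le_sum fun i _ ↦ w.v_pow_nonneg hη i)

lemma v_pow_sub_one {η : K} (hη : 0 < w.v (η - 1)) {n : ℕ} (hn : w.v (n : K) = 0) :
    w.v (η ^ n - 1) = w.v (η - 1) := by
  have hη0 : 0 ≤ w.v η := (w.v_eq_zero_of_v_sub_one_pos hη).ge
  have hgeom : ∑ i ∈ range n, η ^ i = n + ∑ i ∈ range n, (η ^ i - 1) := by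
    simp [sum_sub_distrib]
  have hrest : w.v (n : K) < w.v (∑ i ∈ range n, (η ^ i - 1)) :=
    hn ▸ w.v_lt_sum (by simp) fun i _ ↦ hη.trans_le (w.v_sub_one_le_v_pow_sub_one hη0 i)
  rw [← mul_geom_sum, w.map_mul, hgeom, w.v_add_eq_of_lt hrest, hn, add_zero]

lemma v_zpow_sub_one {η : K} (hη : 0 < w.v (η - 1)) {n : ℤ} (hn : w.v (n : K) = 0) :
    w.v (η ^ n - 1) = w.v (η - 1) := by
  obtain ⟨m, rfl | rfl⟩ := n.eq_nat_or_neg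
  · simpa using w.v_pow_sub_one hη (by simpa using hn)
  have hm : w.v (m : K) = 0 := by simpa [w.v_neg] using hn
  have hη0 := w.v_eq_zero_of_v_sub_one_pos hη
  have hηm : η ^ m ≠ 0 := pow_ne_zero _ (w.v_ne_top_iff.1 (by simp [hη0]))
  have hinv : η ^ (-(m : ℤ)) - 1 = -(η ^ m)⁻¹ * (η ^ m - 1) := by
    rw [zpow_neg, zpow_natCast]
    field_simp
    ring
  rw [hinv, w.map_mul, w.v_neg, w.v_inv, w.v_pow, hη0, nsmul_zero, neg_zero, zero_add,
    w.v_pow_sub_one hη hm]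

end Valuation

variable {K L : Type*} [Field K] [Field L] [Algebra K L]

structure IsTotallyRamifiedOfPrimeDegree (wK : CompleteDiscreteValuation K)
    (wL : CompleteDiscreteValuation L) (p : ℕ) : Prop where
  prime : p.Prime
  finrank_eq : Module.finrank K L = p
  v_algebraMap : ∀ x : K, wL.v (algebraMap K L x) = p • wK.v x

namespace IsTotallyRamifiedOfPrimeDegree

variable {wK : CompleteDiscreteValuation K} {wL : CompleteDiscreteValuation L} {p : ℕ} {π : L}

section Expansion

lemma exists_v_algebraMap_eq (h : IsTotallyRamifiedOfPrimeDegree wK wL p) {c : K} (hc : c ≠ 0) :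
    ∃ a : ℤ, wL.v (algebraMap K L c) = (p * a : ℤ) := by
  obtain ⟨a, ha⟩ := wK.exists_v_eq_coe hc
  exact ⟨a, by rw [h.v_algebraMap, ha, ← WithTop.coe_nsmul, nsmul_eq_mul]⟩

lemma v_sum_algebraMap_mul_pow_le (h : IsTotallyRamifiedOfPrimeDegree wK wL p) (hπ : wL.v π = 1)
    (c : Fin p → K) (j : Fin p) :
    wL.v (∑ i, algebraMap K L (c i) * π ^ (i : ℕ)) ≤
      wL.v (algebraMap K L (c j) * π ^ (j : ℕ)) := by
  refine wL.v_sum_le_of_injOn (fun i _ k _ hfi heq ↦ ?_) (mem_univ j)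
  have hci : c i ≠ 0 := by rintro hc; simp [hc] at hfi
  have hck : c k ≠ 0 := by
    rintro hc
    rw [hc, map_zero, zero_mul, wL.v_zero] at heq
    exact wL.v_ne_top_iff.2 hfi heq
  obtain ⟨a, ha⟩ := h.exists_v_algebraMap_eq hci
  obtain ⟨b, hb⟩ := h.exists_v_algebraMap_eq hck
  rw [wL.map_mul, wL.map_mul, ha, hb, wL.v_pow_of_v_eq_one hπ, wL.v_pow_of_v_eq_one hπ] at heq
  have heq' : (p : ℤ) * a + (i : ℕ) = p * b + (k : ℕ) := by exact_mod_cast heq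
  exact Fin.ext (Int.eq_of_mul_add_eq_mul_add (by exact_mod_cast i.2) (by exact_mod_cast k.2) heq')

lemma linearIndependent_pow (h : IsTotallyRamifiedOfPrimeDegree wK wL p) (hπ : wL.v π = 1) :
    LinearIndependent K (fun i : Fin p ↦ π ^ (i : ℕ)) := by
  refine Fintype.linearIndependent_iff.2 fun g hg j ↦ ?_
  have hsum : ∑ i, algebraMap K L (g i) * π ^ (i : ℕ) = 0 := by
    simpa [Algebra.smul_def] using hg
  have := h.v_sum_algebraMap_mul_pow_le hπ g j
  rwa [hsum, wL.v_zero, top_le_iff, wL.eq_top_iff, mul_eq_zero,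
    or_iff_left (pow_ne_zero _ (wL.ne_zero_of_v_eq_one hπ)), map_eq_zero] at this

lemma exists_eq_sum_pow (h : IsTotallyRamifiedOfPrimeDegree wK wL p) (hπ : wL.v π = 1) (u : L) :
    ∃ c : Fin p → K, u = ∑ i, algebraMap K L (c i) * π ^ (i : ℕ) := by
  have : Nonempty (Fin p) := ⟨⟨0, h.prime.pos⟩⟩
  let b := basisOfLinearIndependentOfCardEqFinrank (h.linearIndependent_pow hπ)
    (by simp [h.finrank_eq])
  refine ⟨b.repr u, ?_⟩
  conv_lhs => rw [← b.sum_repr u]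
  simp [b, Algebra.smul_def]

lemma v_algebraMap_nonneg_of_eq_sum (h : IsTotallyRamifiedOfPrimeDegree wK wL p) (hπ : wL.v π = 1)
    {u : L} (hu : 0 ≤ wL.v u) {c : Fin p → K}
    (hc : u = ∑ i, algebraMap K L (c i) * π ^ (i : ℕ)) (i : Fin p) :
    0 ≤ wL.v (algebraMap K L (c i)) := by
  by_cases hci : c i = 0
  · simp [hci, wL.v_zero]
  obtain ⟨a, ha⟩ := h.exists_v_algebraMap_eq hci
  have hle := hu.trans (hc ▸ h.v_sum_algebraMap_mul_pow_le hπ c i)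
  rw [wL.map_mul, ha, wL.v_pow_of_v_eq_one hπ] at hle
  have hle' : (0 : ℤ) ≤ p * a + (i : ℕ) := by exact_mod_cast hle
  have hi : ((i : ℕ) : ℤ) < p := by exact_mod_cast i.2
  have ha0 : 0 ≤ a := by
    by_contra! hneg
    nlinarith [Int.natCast_nonneg p]
  rw [ha]
  exact_mod_cast mul_nonneg (Int.natCast_nonneg p) ha0

lemma exists_v_sub_algebraMap_ge_one (h : IsTotallyRamifiedOfPrimeDegree wK wL p) (hπ : wL.v π = 1)
    {u : L} (hu : 0 ≤ wL.v u) : ∃ c : K, 1 ≤ wL.v (u - algebraMap K L c) := by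
  obtain ⟨c, hc⟩ := h.exists_eq_sum_pow hπ u
  let i₀ : Fin p := ⟨0, h.prime.pos⟩
  refine ⟨c i₀, ?_⟩
  have hcoeff := h.v_algebraMap_nonneg_of_eq_sum hπ hu hc
  rw [hc, ← add_sum_erase _ _ (mem_univ i₀), pow_zero, mul_one, add_sub_cancel_left]
  refine wL.v_le_sum fun i hi ↦ ?_
  have hi0 : 1 ≤ (i : ℕ) := Nat.one_le_iff_ne_zero.2 fun h0 ↦ ne_of_mem_erase hi (Fin.ext h0)
  rw [wL.map_mul, wL.v_pow_of_v_eq_one hπ]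
  exact le_add_of_nonneg_of_le (hcoeff i) (by exact_mod_cast hi0)

lemma exists_v_sub_algebraMap_gt (h : IsTotallyRamifiedOfPrimeDegree wK wL p) {y : L} {a : ℤ}
    (hy : wL.v y = (p * a : ℤ)) :
    ∃ c : K, ((p * a + 1 : ℤ) : WithTop ℤ) ≤ wL.v (y - algebraMap K L c) := by
  obtain ⟨π, hπ⟩ := wL.surjective 1
  obtain ⟨k, hk⟩ := wK.surjective a
  have hk' : wL.v (algebraMap K L k) = (p * a : ℤ) := by
    rw [h.v_algebraMap, hk, ← WithTop.coe_nsmul, nsmul_eq_mul]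
  have hk0 : algebraMap K L k ≠ 0 :=
    wL.v_ne_top_iff.1 (by rw [hk']; exact WithTop.coe_ne_top)
  have hu : 0 ≤ wL.v (y / algebraMap K L k) := by
    rw [div_eq_mul_inv, wL.map_mul, wL.v_inv, hy, hk']
    norm_cast
    simp
  obtain ⟨c, hc⟩ := h.exists_v_sub_algebraMap_ge_one hπ hu
  refine ⟨k * c, ?_⟩
  have hsplit : y - algebraMap K L (k * c) =
      algebraMap K L k * (y / algebraMap K L k - algebraMap K L c) := by
    rw [_root_.map_mul]; field_simp
  rw [hsplit, wL.map_mul, hk', WithTop.coe_add]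
  gcongr
  exact_mod_cast hc

end Expansion

section GaloisInvariance

lemma exists_v_le_v_apply_add (h : IsTotallyRamifiedOfPrimeDegree wK wL p) (hπ : wL.v π = 1)
    (τ : L ≃ₐ[K] L) : ∃ C : ℤ, ∀ u, wL.v u ≤ wL.v (τ u) + C := by
  have hτπ : τ π ≠ 0 := by simpa using wL.ne_zero_of_v_eq_one hπ
  obtain ⟨r, hr⟩ := wL.exists_v_eq_coe hτπ
  refine ⟨p * |r - 1|, fun u ↦ ?_⟩
  by_cases hu : u = 0
  · simp [hu, wL.v_zero]
  obtain ⟨b, hb⟩ := wL.exists_v_eq_coe hu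
  obtain ⟨c, hc⟩ := h.exists_eq_sum_pow hπ u
  have hτu : τ u = ∑ i, algebraMap K L (c i) * τ π ^ (i : ℕ) := by
    simp [hc, map_sum]
  suffices hle : ((b - p * |r - 1| : ℤ) : WithTop ℤ) ≤ wL.v (τ u) by
    rw [hb]
    calc ((b : ℤ) : WithTop ℤ) = ((b - p * |r - 1| : ℤ) : WithTop ℤ) + (p * |r - 1| : ℤ) := by
          norm_cast; ring
      _ ≤ _ := by gcongr
  rw [hτu]
  refine wL.v_le_sum fun i _ ↦ ?_
  by_cases hci : c i = 0
  · simp [hci, wL.v_zero]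
  obtain ⟨a, ha⟩ := h.exists_v_algebraMap_eq hci
  have hbi := hc ▸ h.v_sum_algebraMap_mul_pow_le hπ c i
  rw [hb, wL.map_mul, ha, wL.v_pow_of_v_eq_one hπ] at hbi
  have hbi' : b ≤ p * a + (i : ℕ) := by exact_mod_cast hbi
  rw [wL.map_mul, ha, wL.v_pow_coe hr]
  have hi : ((i : ℕ) : ℤ) < p := by exact_mod_cast i.2
  have hdev : -(p * |r - 1|) ≤ (i : ℕ) * (r - 1) := by
    nlinarith [neg_abs_le (r - 1), abs_nonneg (r - 1), Int.natCast_nonneg (i : ℕ)]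
  exact_mod_cast (by linarith : b - p * |r - 1| ≤ p * a + (i : ℕ) * r)

lemma v_apply (h : IsTotallyRamifiedOfPrimeDegree wK wL p) (τ : L ≃ₐ[K] L) (u : L) :
    wL.v (τ u) = wL.v u := by
  obtain ⟨π, hπ⟩ := wL.surjective 1
  replace hπ : wL.v π = 1 := hπ
  obtain ⟨C, hC⟩ := h.exists_v_le_v_apply_add hπ τ
  obtain ⟨C', hC'⟩ := h.exists_v_le_v_apply_add hπ τ.symm
  exact le_antisymm (by simpa using wL.v_le_v_map_of_le_add τ.symm hC' (τ u))
    (wL.v_le_v_map_of_le_add τ hC u)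

end GaloisInvariance

section Ramification

lemma le_v_pow_apply_sub (h : IsTotallyRamifiedOfPrimeDegree wK wL p) {τ : L ≃ₐ[K] L}
    {n : WithTop ℤ} (hτ : ∀ z, 0 ≤ wL.v z → n ≤ wL.v (τ z - z)) (k : ℕ) :
    ∀ z, 0 ≤ wL.v z → n ≤ wL.v ((τ ^ k) z - z) := by
  induction k with
  | zero => simp [wL.v_zero]
  | succ k ih =>
    intro z hz
    have hsplit : (τ ^ (k + 1)) z - z = ((τ ^ k) (τ z) - τ z) + (τ z - z) := by
      rw [pow_succ, AlgEquiv.mul_apply]; ring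
    rw [hsplit]
    exact wL.v_le_add (ih _ (by rwa [h.v_apply])) (hτ z hz)

lemma v_apply_uniformizer_sub_le (h : IsTotallyRamifiedOfPrimeDegree wK wL p) (hπ : wL.v π = 1)
    (τ : L ≃ₐ[K] L) {a : L} (ha : 0 ≤ wL.v a) : wL.v (τ π - π) ≤ wL.v (τ a - a) := by
  obtain ⟨c, hc⟩ := h.exists_eq_sum_pow hπ a
  have hτπ : 0 ≤ wL.v (τ π) := by rw [h.v_apply, hπ]; exact zero_le_one
  have hπ0 : 0 ≤ wL.v π := by rw [hπ]; exact zero_le_one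
  have hdiff : τ a - a = ∑ i, algebraMap K L (c i) *
      ((∑ j ∈ range i, τ π ^ j * π ^ (i - 1 - j)) * (τ π - π)) := by
    rw [hc, map_sum, ← sum_sub_distrib]
    refine sum_congr rfl fun i _ ↦ ?_
    rw [geom_sum₂_mul, _root_.map_mul, map_pow, AlgEquiv.commutes]
    ring
  rw [hdiff]
  refine wL.v_le_sum fun i _ ↦ ?_
  rw [wL.map_mul, wL.map_mul]
  refine le_add_of_nonneg_of_le (h.v_algebraMap_nonneg_of_eq_sum hπ ha hc i)
    (le_add_of_nonneg_left (wL.v_le_sum fun j _ ↦ ?_))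
  exact wL.v_mul_nonneg (wL.v_pow_nonneg hτπ j) (wL.v_pow_nonneg hπ0 _)

variable [FiniteDimensional K L] [IsGalois K L] {s : ℕ} {σ : L ≃ₐ[K] L}

lemma card_aut (h : IsTotallyRamifiedOfPrimeDegree wK wL p) : Nat.card (L ≃ₐ[K] L) = p := by
  rw [IsGalois.card_aut_eq_finrank, h.finrank_eq]

lemma orderOf_eq_of_forall_mem_zpowers (h : IsTotallyRamifiedOfPrimeDegree wK wL p)
    (hσ : ∀ τ : L ≃ₐ[K] L, τ ∈ Subgroup.zpowers σ) : orderOf σ = p := by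
  rw [orderOf_eq_card_of_forall_mem_zpowers hσ, h.card_aut]


/-- Minimality of `s` yields some `τ₀ ≠ 1` moving every integer by at least `s`, and `τ₀`
generates the Galois group, which has prime order. -/
lemma le_v_apply_sub (h : IsTotallyRamifiedOfPrimeDegree wK wL p) (hs : IsRamificationBreak K wL s)
    (τ : L ≃ₐ[K] L) {z : L} (hz : 0 ≤ wL.v z) : (s : ℤ) ≤ wL.v (τ z - z) := by
  rcases Nat.eq_zero_or_pos s with rfl | hs0
  · exact wL.v_le_sub (by rwa [h.v_apply]) hz
  have hnf := hs.2 (s - 1) (by omega)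
  simp only [FaithfulOnQuotient, not_forall, not_exists, not_and, not_le] at hnf
  obtain ⟨τ₀, hτ₀, hmove⟩ := hnf
  have : Fact p.Prime := ⟨h.prime⟩
  obtain ⟨k, rfl⟩ : τ ∈ Submonoid.powers τ₀ := mem_powers_iff_mem_zpowers.2
    (zpowers_eq_top_of_prime_card h.card_aut hτ₀ ▸ Subgroup.mem_top τ)
  refine h.le_v_pow_apply_sub (fun z hz ↦ ?_) k z hz
  have := WithTop.coe_add_one_le_of_coe_lt (hmove z hz)
  rwa [show ((s - 1 : ℕ) : ℤ) + 1 = s by omega] at this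

lemma v_apply_uniformizer_sub (h : IsTotallyRamifiedOfPrimeDegree wK wL p) (hπ : wL.v π = 1)
    (hs : IsRamificationBreak K wL s) (hσ : ∀ τ : L ≃ₐ[K] L, τ ∈ Subgroup.zpowers σ) :
    wL.v (σ π - π) = (s : ℤ) := by
  have hσ1 : σ ≠ 1 := by
    rintro rfl
    exact h.prime.one_lt.ne (orderOf_one.symm.trans (h.orderOf_eq_of_forall_mem_zpowers hσ))
  obtain ⟨a, ha, has⟩ := hs.1 σ hσ1
  exact le_antisymm ((h.v_apply_uniformizer_sub_le hπ σ ha).trans has)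
    (h.le_v_apply_sub hs σ (by rw [hπ]; exact zero_le_one))

lemma v_apply_uniformizer_div_sub_one (h : IsTotallyRamifiedOfPrimeDegree wK wL p) (hπ : wL.v π = 1)
    (hs : IsRamificationBreak K wL s) (hσ : ∀ τ : L ≃ₐ[K] L, τ ∈ Subgroup.zpowers σ) :
    wL.v (σ π / π - 1) = (s - 1 : ℤ) := by
  have hπ0 := wL.ne_zero_of_v_eq_one hπ
  rw [show σ π / π - 1 = (σ π - π) * π⁻¹ by field_simp, wL.map_mul, wL.v_inv, hπ,
    h.v_apply_uniformizer_sub hπ hs hσ]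
  norm_cast

/-- `η = σ π / π` has norm `1` and is congruent to all its conjugates modulo `π ^ s`, so
`(η - 1) ^ p = η ^ p - 1` has valuation at least `s`, that is, `p (s - 1) ≥ s`. -/
lemma two_le_of_isRamificationBreak (h : IsTotallyRamifiedOfPrimeDegree wK wL p) [CharP K p]
    (hs : IsRamificationBreak K wL s) (hσ : ∀ τ : L ≃ₐ[K] L, τ ∈ Subgroup.zpowers σ) :
    2 ≤ s := by
  obtain ⟨π, hπ⟩ := wL.surjective 1
  replace hπ : wL.v π = 1 := hπ
  have hπ0 := wL.ne_zero_of_v_eq_one hπ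
  have : Fact p.Prime := ⟨h.prime⟩
  have : CharP L p := charP_of_injective_algebraMap (algebraMap K L).injective p
  have hη : 0 ≤ wL.v (σ π / π) := by
    rw [div_eq_mul_inv, wL.map_mul, wL.v_inv, h.v_apply, hπ]; rfl
  have h1η : wL.v (1 - σ π / π) = (s - 1 : ℤ) := by
    rw [wL.v_sub_comm, h.v_apply_uniformizer_div_sub_one hπ hs hσ]
  set η := σ π / π
  have hnorm : ∏ j ∈ range p, (σ ^ j) η = 1 := by
    rw [σ.prod_range_pow_apply_div hπ0, ← h.orderOf_eq_of_forall_mem_zpowers hσ,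
      pow_orderOf_eq_one, AlgEquiv.one_apply, div_self hπ0]
  have hle := wL.v_le_v_prod_sub_pow (a := fun j ↦ (σ ^ j) η) (fun j ↦ by rwa [h.v_apply]) hη
    (fun j ↦ h.le_v_apply_sub hs (σ ^ j) hη) p
  rw [hnorm, ← one_pow p, ← sub_pow_char, wL.v_pow_coe h1η] at hle
  have hle' : (s : ℤ) ≤ p * (s - 1) := by exact_mod_cast hle
  nlinarith [h.prime.two_le]

lemma v_apply_sub_of_not_dvd (h : IsTotallyRamifiedOfPrimeDegree wK wL p) [CharP K p]
    (hπ : wL.v π = 1) (hs : IsRamificationBreak K wL s)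
    (hσ : ∀ τ : L ≃ₐ[K] L, τ ∈ Subgroup.zpowers σ) {y : L} {n : ℤ} (hy : wL.v y = n)
    (hn : ¬(p : ℤ) ∣ n) : wL.v (σ y - y) = (n + s - 1 : ℤ) := by
  have hπ0 := wL.ne_zero_of_v_eq_one hπ
  have : CharP L p := charP_of_injective_algebraMap (algebraMap K L).injective p
  obtain ⟨η, hηdef⟩ : ∃ η, η = σ π / π := ⟨_, rfl⟩
  have hη1 : wL.v (η - 1) = (s - 1 : ℤ) := hηdef ▸ h.v_apply_uniformizer_div_sub_one hπ hs hσ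
  have hη : 0 < wL.v (η - 1) := by
    rw [hη1]
    exact_mod_cast (by have := h.two_le_of_isRamificationBreak hs hσ; omega : (0 : ℤ) < s - 1)
  have hηn : wL.v (η ^ n - 1) = (s - 1 : ℤ) :=
    (wL.v_zpow_sub_one hη (wL.v_intCast_eq_zero h.prime hn)).trans hη1
  have hηn0 : wL.v (η ^ n) = 0 := by
    simpa using wL.v_zpow_coe (wL.v_eq_zero_of_v_sub_one_pos hη) n
  obtain ⟨u, hudef⟩ : ∃ u, u = y * π ^ (-n) := ⟨_, rfl⟩
  have hu : wL.v u = 0 := by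
    rw [hudef, wL.map_mul, hy, wL.v_zpow_of_v_eq_one hπ]
    norm_cast
    simp
  have hσu := h.le_v_apply_sub hs σ hu.ge
  have hσy : σ y - y = π ^ n * ((η ^ n - 1) * u + η ^ n * (σ u - u)) := by
    have hyu : y = u * π ^ n := by rw [hudef, mul_assoc, zpow_neg_mul_zpow_self n hπ0, mul_one]
    have hσπ : σ π = π * η := by rw [hηdef, mul_div_cancel₀ _ hπ0]
    rw [hyu, _root_.map_mul, map_zpow₀, hσπ, mul_zpow]
    ring
  have hlt : wL.v ((η ^ n - 1) * u) < wL.v (η ^ n * (σ u - u)) := by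
    rw [wL.map_mul, wL.map_mul, hηn, hu, hηn0, add_zero, zero_add]
    exact lt_of_lt_of_le (by exact_mod_cast (by omega : (s : ℤ) - 1 < s)) hσu
  rw [hσy, wL.map_mul, wL.v_add_eq_of_lt hlt, wL.map_mul, hηn, hu, add_zero,
    wL.v_zpow_of_v_eq_one hπ, ← WithTop.coe_add]
  congr 1
  ring

lemma exists_v_nonneg_apply_sub_eq [CharP K p] (h : IsTotallyRamifiedOfPrimeDegree wK wL p)
    (hs : IsRamificationBreak K wL s) (hσ : ∀ τ : L ≃ₐ[K] L, τ ∈ Subgroup.zpowers σ) {x : L}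
    (hx : (s : ℤ) ≤ wL.v x) {y : L} (hy : σ y - y = x) : ∃ y', 0 ≤ wL.v y' ∧ σ y' - y' = x := by
  obtain ⟨π, hπ⟩ := wL.surjective 1
  suffices H : ∀ m : ℕ, ∀ y, σ y - y = x → ((-m : ℤ) : WithTop ℤ) ≤ wL.v y →
      ∃ y', 0 ≤ wL.v y' ∧ σ y' - y' = x by
    obtain ⟨m, hm⟩ : ∃ m : ℕ, ((-m : ℤ) : WithTop ℤ) ≤ wL.v y := by
      by_cases hy0 : y = 0
      · exact ⟨0, by simp [hy0, wL.v_zero]⟩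
      obtain ⟨a, ha⟩ := wL.exists_v_eq_coe hy0
      exact ⟨a.natAbs, by rw [ha]; exact_mod_cast (by omega : -(a.natAbs : ℤ) ≤ a)⟩
    exact H m y hy hm
  intro m
  induction m with
  | zero => exact fun y hy hy0 ↦ ⟨y, by simpa using hy0, hy⟩
  | succ m ih =>
    intro y hy hym
    by_cases hlt : ((-m : ℤ) : WithTop ℤ) ≤ wL.v y
    · exact ih y hy hlt
    have hyv : wL.v y = (-(m + 1) : ℤ) := by
      obtain ⟨a, ha⟩ := wL.exists_v_eq_coe (x := y) (by rintro rfl; simp [wL.v_zero] at hlt)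
      rw [ha] at hym hlt ⊢
      have : -((m : ℤ) + 1) ≤ a := by exact_mod_cast hym
      have : ¬-(m : ℤ) ≤ a := by exact_mod_cast hlt
      congr 1
      omega
    by_cases hdvd : (p : ℤ) ∣ -(m + 1)
    · obtain ⟨a, ha⟩ := hdvd
      obtain ⟨c, hc⟩ := h.exists_v_sub_algebraMap_gt (ha ▸ hyv)
      refine ih (y - algebraMap K L c) (by rw [map_sub, AlgEquiv.commutes, ← hy]; ring) ?_
      rwa [← ha, show -((m : ℤ) + 1) + 1 = -m by ring] at hc
    · have hxv := h.v_apply_sub_of_not_dvd hπ hs hσ hyv hdvd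
      rw [hy] at hxv
      rw [hxv] at hx
      have : (s : ℤ) ≤ -(m + 1) + s - 1 := by exact_mod_cast hx
      omega

end Ramification

end IsTotallyRamifiedOfPrimeDegree

end CompleteDiscreteValuation

/-- Let `L/K` be a totally ramified Galois extension of degree `p` of
complete discrete valued fields of characteristic `p` with ramification break `s`, and
let `σ` generate `Gal(L/K)`.  If `x ∈ O_L` has trace zero and `v_L(x) ≥ s`, then
`x ∈ (σ - 1) O_L`; equivalently, a trace-zero integer representing a nonzero class of
`H¹(Gal(L/K), O_L)` has valuation at most `s - 1`. -/
theorem trace_zero_high_valuation_is_coboundary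
    (p : ℕ) (hp : p.Prime)
    {K L : Type*} [Field K] [Field L] [Algebra K L] [CharP K p]
    (wK : CompleteDiscreteValuation K) (wL : CompleteDiscreteValuation L)
    [IsGalois K L] [FiniteDimensional K L] (hdeg : Module.finrank K L = p)
    (htot : ∀ x : K, wL.v (algebraMap K L x) = p • wK.v x)
    (s : ℕ) (hs : IsRamificationBreak K wL s)
    (σ : L ≃ₐ[K] L) (hσ : ∀ τ : L ≃ₐ[K] L, τ ∈ Subgroup.zpowers σ) :
    ∀ x : L, x ∈ wL.integers → (∑ τ : L ≃ₐ[K] L, τ x = 0) →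
      (((s : ℤ) : WithTop ℤ) ≤ wL.v x) →
      ∃ y : L, y ∈ wL.integers ∧ x = σ y - y := by
  intro x _ hx hxs
  have h : IsTotallyRamifiedOfPrimeDegree wK wL p := ⟨hp, hdeg, htot⟩
  obtain ⟨y, hy⟩ := exists_apply_sub_self_eq_of_sum_aut_eq_zero hσ hx
  obtain ⟨y', hy', hy'x⟩ := h.exists_v_nonneg_apply_sub_eq hs hσ hxs hy
  exact ⟨y', hy', hy'x.symm⟩
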